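/- arXiv:2010.15008 — 3 statements merged into one kernel-verified Lean document; each statement's English description precedes it below -/
import Mathlib

section
/- Fix n ≥ 1. For every nonempty subset I ⊆ X^n there exists a receiver strategy g with image(g) = I (e.g. g equal to the identity on I and constant equal to some fixed element of I off I) such that D*(g) = ∑_{λ∈Λ} P(λ)·|Ī_λ|, where Ī_λ is the λ-partition of I. -/
noncomputable section

namespace IE

/-- The `n`-letter utility: `U_n(x̂, x, λ) = (1/n) ∑ᵢ U(x̂ᵢ, xᵢ, λ)`. -/
def Un {X Λ : Type*} [Fintype X] (U : X → X → Λ → ℝ) (n : ℕ)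
    (xh x : Fin n → X) (t : Λ) : ℝ :=
  (1 / (n : ℝ)) * ∑ i, U (xh i) (x i) t

/-- The `λ`-partition of a set `I ⊆ X^n`. -/
def lamPart {X Λ : Type*} [Fintype X] (U : X → X → Λ → ℝ) (n : ℕ)
    (I : Set (Fin n → X)) (t : Λ) : Set (Fin n → X) :=
  {x | x ∈ I ∧ ∀ y ∈ I, y ≠ x → Un U n x x t > Un U n y x t}

/-- The best-response set of sender type `λ` to a receiver strategy `g`. -/
def BR {X Λ : Type*} [Fintype X] (U : X → X → Λ → ℝ) (n : ℕ)
    (g : (Fin n → X) → (Fin n → X)) (t : Λ) :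
    Set ((Fin n → X) → (Fin n → X)) :=
  {s | ∀ x : Fin n → X, ∀ s' : (Fin n → X) → (Fin n → X),
    Un U n (g (s x)) x t ≥ Un U n (g (s' x)) x t}

/-- The set of perfectly recovered sequences `D(g,s)`. -/
def Drec {X : Type*} (n : ℕ) (g s : (Fin n → X) → (Fin n → X)) :
    Set (Fin n → X) :=
  {x | g (s x) = x}

/-- `min_{s ∈ B(g,λ)} |D(g,s)|`. -/
def minD {X Λ : Type*} [Fintype X] (U : X → X → Λ → ℝ) (n : ℕ)
    (g : (Fin n → X) → (Fin n → X)) (t : Λ) : ℕ :=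
  sInf ((fun s => (Drec n g s).ncard) '' BR U n g t)

/-- `D*(g) = ∑_λ P(λ) · min_{s ∈ B(g,λ)} |D(g,s)|`. -/
def Dstar {X Λ : Type*} [Fintype X] [Fintype Λ] (U : X → X → Λ → ℝ)
    (P : Λ → ℝ) (n : ℕ) (g : (Fin n → X) → (Fin n → X)) : ℝ :=
  ∑ t, P t * (minD U n g t : ℝ)

/-- The sender graph `G_λ^n` on `X^n`. -/
def senderGraph {X Λ : Type*} [Fintype X] (U : X → X → Λ → ℝ) (n : ℕ)
    (t : Λ) : SimpleGraph (Fin n → X) where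
  Adj x y := x ≠ y ∧ (Un U n x x t ≤ Un U n y x t ∨ Un U n y y t ≤ Un U n x y t)
  symm := by
    constructor
    intro x y h
    exact ⟨h.1.symm, h.2.symm⟩
  loopless := by
    constructor
    intro x h
    exact h.1 rfl

/-- The single-letter sender graph `G_λ` on `X`. -/
def senderGraph1 {X Λ : Type*} (U : X → X → Λ → ℝ) (t : Λ) :
    SimpleGraph X where
  Adj x y := x ≠ y ∧ (U x x t ≤ U y x t ∨ U y y t ≤ U x y t)
  symm := by
    constructor
    intro x y h
    exact ⟨h.1.symm, h.2.symm⟩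
  loopless := by
    constructor
    intro x h
    exact h.1 rfl

/-- A set of vertices is independent in a graph. -/
def IsIndep {V : Type*} (G : SimpleGraph V) (s : Set V) : Prop :=
  ∀ ⦃x⦄, x ∈ s → ∀ ⦃y⦄, y ∈ s → ¬ G.Adj x y

/-- The independence number `α(G)` of a graph on a finite vertex set. -/
def alpha {V : Type*} [Fintype V] (G : SimpleGraph V) : ℕ :=
  sSup {k | ∃ s : Set V, IsIndep G s ∧ s.ncard = k}

end IE

/-!
Take for `g` a retraction onto `I`. A sender of type `λ` best-responds by announcing a
maximiser of `y ↦ U_n(y, x, λ)` over `I`; the maximiser is forced to be `x` itself exactly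
when `x` lies in the `λ`-partition, and otherwise it can be chosen different from `x`. So
every best response recovers the `λ`-partition, and some best response recovers nothing
else.
-/

theorem Set.Finite.exists_isMaxOn_eq_iff {α : Type*} {I : Set α} (hfin : I.Finite)
    (hne : I.Nonempty) (f : α → ℝ) (x : α) :
    ∃ y ∈ I, IsMaxOn f I y ∧ (y = x ↔ x ∈ I ∧ ∀ z ∈ I, z ≠ x → f z < f x) := by
  by_cases hx : x ∈ I ∧ ∀ z ∈ I, z ≠ x → f z < f x
  · refine ⟨x, hx.1, isMaxOn_iff.2 fun z hz => ?_, iff_of_true rfl hx⟩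
    rcases eq_or_ne z x with rfl | hzx
    · exact le_rfl
    · exact (hx.2 z hz hzx).le
  obtain ⟨m, hmI, hm⟩ := Set.exists_max_image I f hfin hne
  rcases ne_or_eq m x with hmx | rfl
  · exact ⟨m, hmI, hm, iff_of_false hmx hx⟩
  -- `m` is a maximiser but not a strict one, so a second maximiser exists.
  obtain ⟨z, hzI, hzm, hmz⟩ : ∃ z ∈ I, z ≠ m ∧ f m ≤ f z := by
    simpa [hmI] using hx
  exact ⟨z, hzI, fun w hw => (hm w hw).trans hmz, iff_of_false hzm hx⟩

namespace IE

variable {X Λ : Type*} [Fintype X] {U : X → X → Λ → ℝ} {n : ℕ} {I : Set (Fin n → X)}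
  {g : (Fin n → X) → (Fin n → X)} {t : Λ}

theorem lamPart_subset_Drec (hgI : ∀ x, g x ∈ I) (hgid : ∀ x ∈ I, g x = x)
    {s : (Fin n → X) → (Fin n → X)} (hs : s ∈ BR U n g t) :
    lamPart U n I t ⊆ Drec n g s := by
  intro x ⟨hxI, hxstrict⟩
  have hbest : Un U n x x t ≤ Un U n (g (s x)) x t := by
    simpa [hgid x hxI] using hs x id
  by_contra hne
  exact (hxstrict _ (hgI (s x)) hne).not_ge hbest

theorem exists_mem_BR_Drec_eq_lamPart (hI : I.Nonempty) (hgI : ∀ x, g x ∈ I)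
    (hgid : ∀ x ∈ I, g x = x) :
    ∃ s ∈ BR U n g t, Drec n g s = lamPart U n I t := by
  choose s hsI hsmax hsx using fun x =>
    I.toFinite.exists_isMaxOn_eq_iff hI (fun y => Un U n y x t) x
  refine ⟨s, fun x s' => ?_, Set.ext fun x => ?_⟩
  · rw [hgid _ (hsI x)]
    exact hsmax x (hgI (s' x))
  · simp only [Drec, Set.mem_ofPred_eq, hgid _ (hsI x), hsx]
    rfl

theorem minD_eq_ncard_lamPart (hI : I.Nonempty) (hgI : ∀ x, g x ∈ I)
    (hgid : ∀ x ∈ I, g x = x) :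
    minD U n g t = (lamPart U n I t).ncard := by
  obtain ⟨s₀, hs₀, hD⟩ := exists_mem_BR_Drec_eq_lamPart (U := U) (t := t) hI hgI hgid
  refine le_antisymm (Nat.sInf_le ⟨s₀, hs₀, by simp only [hD]⟩) ?_
  refine le_csInf ⟨_, Set.mem_image_of_mem _ hs₀⟩ ?_
  rintro _ ⟨s, hs, rfl⟩
  exact Set.ncard_le_ncard (lamPart_subset_Drec hgI hgid hs) (Set.toFinite _)

end IE

theorem stmt5_general {X Λ : Type*} [Fintype X] [Fintype Λ]
    (U : X → X → Λ → ℝ) (P : Λ → ℝ)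
    (n : ℕ) (I : Set (Fin n → X)) (hI : I.Nonempty) :
    ∃ g : (Fin n → X) → (Fin n → X), Set.range g = I ∧
      IE.Dstar U P n g = ∑ t, P t * ((IE.lamPart U n I t).ncard : ℝ) := by
  classical
  have ⟨x₀, hx₀⟩ := hI
  let g : (Fin n → X) → (Fin n → X) := fun x => if x ∈ I then x else x₀
  have hgI : ∀ x, g x ∈ I := fun x => by
    by_cases hx : x ∈ I <;> simp [g, hx, hx₀]
  have hgid : ∀ x ∈ I, g x = x := fun x hx => if_pos hx
  refine ⟨g, (Set.range_subset_iff.2 hgI).antisymm fun x hx => ⟨x, hgid x hx⟩, ?_⟩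
  simp only [IE.Dstar, IE.minD_eq_ncard_lamPart hI hgI hgid]

/-- for every nonempty `I ⊆ X^n` there is a receiver strategy `g` with
image `I` achieving `D*(g) = ∑_λ P(λ)·|Ī_λ|`. -/
theorem stmt5 {X Λ : Type*} [Fintype X] [Nonempty X] [Fintype Λ] [Nonempty Λ]
    (U : X → X → Λ → ℝ) (P : Λ → ℝ) (hP0 : ∀ t, 0 ≤ P t) (hP1 : ∑ t, P t = 1)
    (n : ℕ) (hn : 1 ≤ n) (I : Set (Fin n → X)) (hI : I.Nonempty) :
    ∃ g : (Fin n → X) → (Fin n → X), Set.range g = I ∧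
      IE.Dstar U P n g = ∑ t, P t * ((IE.lamPart U n I t).ncard : ℝ) :=
  stmt5_general U P n I hI
end
end

section
/- (Theorem 2.) Fix n ≥ 1. The maximum of D*(g) over all receiver strategies g equals the maximum over nonempty subsets I ⊆ X^n of ∑_{λ∈Λ} P(λ)·|Ī_λ|, where Ī_λ is the λ-partition of I. In particular, every Stackelberg equilibrium strategy g* satisfies D*(g*) = max_{I ⊆ X^n, I ≠ ∅} ∑_{λ∈Λ} P(λ)·|Ī_λ|. -/
noncomputable section

/-!
For every receiver strategy `g`, the guaranteed count `min_{s ∈ B(g,λ)} |D(g,s)|` equals the size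
of the `λ`-partition of `I = range g`. A best response can always point `x` to a maximiser of
`U(·, x, λ)` on `I` other than `x` whenever one exists, so only sequences that are the strict unique
maximiser for themselves are recovered; conversely such a sequence `x ∈ I` is recovered by every best
response, since any other output of `g` is strictly worse for `x` than `x` itself. Hence
`D*(g) = ∑_λ P(λ)·|Ī_λ|` with `I = range g`, and every nonempty `I` is the range of some `g`.
-/

open Set IE

theorem Set.Nonempty.exists_range_eq {α : Type*} {s : Set α} (hs : s.Nonempty) :
    ∃ f : α → α, range f = s := by
  classical
  obtain ⟨a, ha⟩ := hs
  refine ⟨fun x => if x ∈ s then x else a, Subset.antisymm ?_ fun x hx => ⟨x, if_pos hx⟩⟩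
  rintro _ ⟨x, rfl⟩
  by_cases hx : x ∈ s <;> simp [hx, ha]

theorem Set.Finite.exists_isMaxOn_eq_imp_strict {α β : Type*} [LinearOrder β] {s : Set α}
    (hs : s.Finite) (hne : s.Nonempty) (f : α → β) (x : α) :
    ∃ y ∈ s, IsMaxOn f s y ∧ (y = x → ∀ b ∈ s, b ≠ x → f b < f x) := by
  by_cases h : ∃ b ∈ s, IsMaxOn f s b ∧ b ≠ x
  · obtain ⟨b, hb, hmax, hbx⟩ := h
    exact ⟨b, hb, hmax, fun hb' => absurd hb' hbx⟩
  · push Not at h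
    obtain ⟨y, hy, hmax⟩ := s.exists_max_image f hs hne
    refine ⟨y, hy, isMaxOn_iff.mpr hmax, ?_⟩
    rintro rfl b hb hby
    by_contra! hle
    exact hby (h b hb (isMaxOn_iff.mpr fun z hz => (hmax z hz).trans hle))

namespace IE

variable {X Λ : Type*} [Fintype X] [Nonempty X] (U : X → X → Λ → ℝ) (n : ℕ)
  (g : (Fin n → X) → (Fin n → X)) (t : Λ)

theorem exists_mem_BR_Drec_subset_lamPart :
    ∃ s ∈ BR U n g t, Drec n g s ⊆ lamPart U n (range g) t := by
  choose y hy hymax hystrict using fun x =>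
    (toFinite (range g)).exists_isMaxOn_eq_imp_strict (range_nonempty g)
      (fun z => Un U n z x t) x
  choose s hs using hy
  refine ⟨s, fun x s' => ?_, fun x hx => ⟨⟨s x, hx⟩, hystrict x ((hs x).symm.trans hx)⟩⟩
  rw [hs]
  exact isMaxOn_iff.mp (hymax x) _ ⟨s' x, rfl⟩

omit [Nonempty X] in
theorem lamPart_range_subset_Drec {s : (Fin n → X) → (Fin n → X)} (hs : s ∈ BR U n g t) :
    lamPart U n (range g) t ⊆ Drec n g s := by
  rintro _ ⟨⟨z, rfl⟩, hstrict⟩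
  by_contra hne
  exact (hstrict _ ⟨s (g z), rfl⟩ hne).not_ge (hs (g z) fun _ => z)

theorem minD_eq_ncard_lamPart_range : minD U n g t = (lamPart U n (range g) t).ncard := by
  obtain ⟨s, hs, hsub⟩ := exists_mem_BR_Drec_subset_lamPart U n g t
  refine le_antisymm ((Nat.sInf_le (mem_image_of_mem _ hs)).trans
    (ncard_le_ncard hsub (toFinite _))) (le_csInf (Set.image_nonempty.mpr ⟨s, hs⟩) ?_)
  rintro _ ⟨s', hs', rfl⟩
  exact ncard_le_ncard (lamPart_range_subset_Drec U n g t hs') (toFinite _)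

theorem Dstar_eq_sum_ncard_lamPart_range [Fintype Λ] (P : Λ → ℝ) :
    Dstar U P n g = ∑ t, P t * ((lamPart U n (range g) t).ncard : ℝ) := by
  simp only [Dstar, minD_eq_ncard_lamPart_range]

end IE

theorem stmt6_general {X Λ : Type*} [Fintype X] [Nonempty X] [Fintype Λ]
    (U : X → X → Λ → ℝ) (P : Λ → ℝ)
    (n : ℕ)
    (gstar : (Fin n → X) → (Fin n → X))
    (hstar : ∀ g : (Fin n → X) → (Fin n → X), IE.Dstar U P n g ≤ IE.Dstar U P n gstar) :
    IsGreatest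
      {v : ℝ | ∃ I : Set (Fin n → X), I.Nonempty ∧
        v = ∑ t, P t * ((IE.lamPart U n I t).ncard : ℝ)}
      (IE.Dstar U P n gstar) := by
  refine ⟨⟨range gstar, range_nonempty gstar, Dstar_eq_sum_ncard_lamPart_range U n gstar P⟩, ?_⟩
  rintro _ ⟨I, hI, rfl⟩
  obtain ⟨g, rfl⟩ := hI.exists_range_eq
  rw [← Dstar_eq_sum_ncard_lamPart_range]
  exact hstar g

/-- Theorem 2: every Stackelberg equilibrium strategy `g*` attains the
maximum over nonempty `I ⊆ X^n` of `∑_λ P(λ)·|Ī_λ|`. -/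
theorem stmt6 {X Λ : Type*} [Fintype X] [Nonempty X] [Fintype Λ] [Nonempty Λ]
    (U : X → X → Λ → ℝ) (P : Λ → ℝ) (hP0 : ∀ t, 0 ≤ P t) (hP1 : ∑ t, P t = 1)
    (n : ℕ) (hn : 1 ≤ n)
    (gstar : (Fin n → X) → (Fin n → X))
    (hstar : ∀ g : (Fin n → X) → (Fin n → X), IE.Dstar U P n g ≤ IE.Dstar U P n gstar) :
    IsGreatest
      {v : ℝ | ∃ I : Set (Fin n → X), I.Nonempty ∧
        v = ∑ t, P t * ((IE.lamPart U n I t).ncard : ℝ)}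
      (IE.Dstar U P n gstar) :=
  stmt6_general U P n gstar hstar
end
end

section
/- (Theorem 3, lower bound.) For every sequence (g_n*)_{n≥1} of Stackelberg equilibrium strategies of the receiver, limsup_{n→∞} R(g_n*) ≥ α(∪_{λ∈Λ} G_λ). -/
noncomputable section

/-!
Take a maximum independent set `S` of `⋃_λ G_λ`. For every type `λ` and distinct letters
`a, b ∈ S`, reporting `b` instead of `a` strictly lowers the utility, so on the block set `Sⁿ`
truthful reporting is strictly better for every type than any other report in `Sⁿ`.
A receiver who maps every sequence into `Sⁿ` and fixes `Sⁿ` therefore recovers all of `Sⁿ`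
under every best response of every type, whence `D*(g*ₙ) ≥ |S|ⁿ = αⁿ` for every `n ≥ 1`.
As `D*(g) ≤ |X|ⁿ`, the sequence `R(g*ₙ)` is bounded, and the limsup is at least `α`.
-/

open Set

theorem Set.ncard_univ_pi_const {ι α : Type*} [Fintype ι] (S : Set α) :
    (Set.pi univ fun _ : ι => S).ncard = S.ncard ^ Fintype.card ι := by
  rw [← Nat.card_coe_set_eq, Nat.card_congr (Equiv.Set.univPi _), Nat.card_fun,
    Nat.card_coe_set_eq, Nat.card_eq_fintype_card]

namespace IE

theorem exists_isIndep_ncard_eq_alpha {V : Type*} [Fintype V] (G : SimpleGraph V) :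
    ∃ S : Set V, IsIndep G S ∧ S.ncard = alpha G := by
  have h_empty : (0 : ℕ) ∈ {k | ∃ S : Set V, IsIndep G S ∧ S.ncard = k} :=
    ⟨∅, fun _ h => absurd h (notMem_empty _), ncard_empty V⟩
  refine Nat.sSup_mem ⟨0, h_empty⟩ ⟨Fintype.card V, ?_⟩
  rintro _ ⟨S, -, rfl⟩
  exact (ncard_le_ncard (subset_univ S)).trans_eq (by simp [ncard_univ])

theorem lt_of_isIndep_iSup_senderGraph1 {X Λ : Type*} {U : X → X → Λ → ℝ} {S : Set X}
    (hS : IsIndep (⨆ t, senderGraph1 U t) S) {a b : X} (ha : a ∈ S) (hb : b ∈ S) (hab : a ≠ b)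
    (t : Λ) : U b a t < U a a t := by
  have h := hS ha hb
  simp only [SimpleGraph.iSup_adj, not_exists] at h
  by_contra! hle
  exact h t ⟨hab, Or.inl hle⟩

variable {X Λ : Type*} [Fintype X] (U : X → X → Λ → ℝ) {n : ℕ}

theorem BR_nonempty (g : (Fin n → X) → (Fin n → X)) (t : Λ) : (BR U n g t).Nonempty := by
  have h : ∀ x : Fin n → X, ∃ z, ∀ w, Un U n (g w) x t ≤ Un U n (g z) x t :=
    fun x => haveI : Nonempty (Fin n → X) := ⟨x⟩; Finite.exists_max _
  choose s hs using h
  exact ⟨s, fun x s' => hs x (s' x)⟩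

theorem minD_le_card_pow (g : (Fin n → X) → (Fin n → X)) (t : Λ) :
    minD U n g t ≤ Fintype.card X ^ n := by
  obtain ⟨s, hs⟩ := BR_nonempty U g t
  calc minD U n g t ≤ (Drec n g s).ncard := Nat.sInf_le ⟨s, hs, rfl⟩
    _ ≤ (univ : Set (Fin n → X)).ncard := ncard_le_ncard (subset_univ _)
    _ = Fintype.card X ^ n := by simp [ncard_univ]

theorem le_minD {g : (Fin n → X) → (Fin n → X)} {t : Λ} {m : ℕ}
    (h : ∀ s ∈ BR U n g t, m ≤ (Drec n g s).ncard) : m ≤ minD U n g t :=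
  le_csInf ((BR_nonempty U g t).image _) (by rintro _ ⟨s, hs, rfl⟩; exact h s hs)

theorem subset_Drec_of_subset_lamPart {I : Set (Fin n → X)} {t : Λ}
    (hI : I ⊆ lamPart U n I t) {g : (Fin n → X) → (Fin n → X)}
    (hg_mem : ∀ x, g x ∈ I) (hg_fix : ∀ x ∈ I, g x = x) {s : (Fin n → X) → (Fin n → X)}
    (hs : s ∈ BR U n g t) : I ⊆ Drec n g s := by
  intro x hx
  by_contra hne
  have h_truthful : Un U n (g (s x)) x t ≥ Un U n (g x) x t := hs x id
  rw [hg_fix x hx] at h_truthful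
  exact (hI hx).2 _ (hg_mem _) hne |>.not_ge h_truthful

section Dstar

variable [Fintype Λ] {P : Λ → ℝ} (hP0 : ∀ t, 0 ≤ P t) (hP1 : ∑ t, P t = 1)
include hP0 hP1

theorem le_Dstar {g : (Fin n → X) → (Fin n → X)} {m : ℕ} (h : ∀ t, m ≤ minD U n g t) :
    (m : ℝ) ≤ Dstar U P n g :=
  calc (m : ℝ) = ∑ t, P t * m := by rw [← Finset.sum_mul, hP1, one_mul]
    _ ≤ Dstar U P n g :=
      Finset.sum_le_sum fun t _ => mul_le_mul_of_nonneg_left (by exact_mod_cast h t) (hP0 t)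

theorem Dstar_nonneg (g : (Fin n → X) → (Fin n → X)) : 0 ≤ Dstar U P n g := by
  exact_mod_cast le_Dstar U hP0 hP1 (m := 0) fun _ => Nat.zero_le _

theorem Dstar_le_card_pow (g : (Fin n → X) → (Fin n → X)) :
    Dstar U P n g ≤ (Fintype.card X : ℝ) ^ n :=
  calc Dstar U P n g ≤ ∑ t, P t * ((Fintype.card X ^ n : ℕ) : ℝ) :=
        Finset.sum_le_sum fun t _ =>
          mul_le_mul_of_nonneg_left (by exact_mod_cast minD_le_card_pow U g t) (hP0 t)
    _ = (Fintype.card X : ℝ) ^ n := by rw [← Finset.sum_mul, hP1, one_mul]; push_cast; rfl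

theorem Dstar_rpow_le_card (hn : n ≠ 0) (g : (Fin n → X) → (Fin n → X)) :
    Dstar U P n g ^ ((1 : ℝ) / n) ≤ Fintype.card X := by
  rw [one_div, Real.rpow_inv_le_iff_of_pos (Dstar_nonneg U hP0 hP1 g) (Nat.cast_nonneg _)
    (by positivity), Real.rpow_natCast]
  exact Dstar_le_card_pow U hP0 hP1 g

theorem exists_ncard_le_Dstar {I : Set (Fin n → X)} (hI : ∀ t, I ⊆ lamPart U n I t) :
    ∃ g, (I.ncard : ℝ) ≤ Dstar U P n g := by
  classical
  rcases I.eq_empty_or_nonempty with rfl | ⟨x₀, hx₀⟩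
  · exact ⟨id, by simpa using Dstar_nonneg U hP0 hP1 id⟩
  refine ⟨I.piecewise id fun _ => x₀, le_Dstar U hP0 hP1 fun t => le_minD U fun s hs => ?_⟩
  refine ncard_le_ncard (subset_Drec_of_subset_lamPart U (hI t) ?_ ?_ hs)
  · intro x
    by_cases hx : x ∈ I <;> simp [hx, hx₀]
  · exact fun x hx => by simp [hx]

end Dstar

theorem pi_subset_lamPart {S : Set X} (hS : IsIndep (⨆ t, senderGraph1 U t) S) (t : Λ) :
    (Set.pi univ fun _ : Fin n => S) ⊆ lamPart U n (Set.pi univ fun _ => S) t := by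
  intro x hx
  refine ⟨hx, fun y hy hne => ?_⟩
  obtain ⟨i, hi⟩ := Function.ne_iff.mp hne
  have hn : (0 : ℝ) < n := by exact_mod_cast i.pos
  have hlt : ∀ j, x j ≠ y j → U (y j) (x j) t < U (x j) (x j) t := fun j hj =>
    lt_of_isIndep_iSup_senderGraph1 hS (hx j trivial) (hy j trivial) hj t
  refine mul_lt_mul_of_pos_left (Finset.sum_lt_sum (fun j _ => ?_) ⟨i, Finset.mem_univ _,
    hlt i (Ne.symm hi)⟩) (by positivity)
  by_cases hj : x j = y j
  · rw [hj]
  · exact (hlt j hj).le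

end IE

theorem stmt13_general {X Λ : Type*} [Fintype X] [Fintype Λ]
    (U : X → X → Λ → ℝ) (P : Λ → ℝ) (hP0 : ∀ t, 0 ≤ P t) (hP1 : ∑ t, P t = 1)
    (gstar : ∀ n : ℕ, (Fin n → X) → (Fin n → X))
    (hstar : ∀ n : ℕ, 1 ≤ n → ∀ g : (Fin n → X) → (Fin n → X),
      IE.Dstar U P n g ≤ IE.Dstar U P n (gstar n)) :
    (IE.alpha (⨆ t : Λ, IE.senderGraph1 U t) : ℝ)
      ≤ Filter.limsup
          (fun n : ℕ => IE.Dstar U P n (gstar n) ^ ((1 : ℝ) / n)) Filter.atTop := by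
  obtain ⟨S, hS, hcard⟩ := IE.exists_isIndep_ncard_eq_alpha (⨆ t : Λ, IE.senderGraph1 U t)
  rw [← hcard]
  have h_lower : ∀ n ≥ 1, (S.ncard : ℝ) ≤ IE.Dstar U P n (gstar n) ^ ((1 : ℝ) / n) := by
    intro n hn
    obtain ⟨g, hg⟩ := IE.exists_ncard_le_Dstar U hP0 hP1 (IE.pi_subset_lamPart (n := n) U hS)
    rw [Set.ncard_univ_pi_const, Fintype.card_fin] at hg
    rw [one_div, Real.le_rpow_inv_iff_of_pos (Nat.cast_nonneg _)
      (IE.Dstar_nonneg U hP0 hP1 _) (by positivity), Real.rpow_natCast]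
    exact_mod_cast hg.trans (hstar n hn g)
  have h_upper : ∀ n ≥ 1, IE.Dstar U P n (gstar n) ^ ((1 : ℝ) / n) ≤ Fintype.card X :=
    fun n hn => IE.Dstar_rpow_le_card U hP0 hP1 (Nat.one_le_iff_ne_zero.mp hn) _
  exact Filter.le_limsup_of_frequently_le (Filter.eventually_atTop.2 ⟨1, h_lower⟩).frequently
    (Filter.isBoundedUnder_of_eventually_le (Filter.eventually_atTop.2 ⟨1, h_upper⟩))

/-- Theorem 3, lower bound: for any sequence of Stackelberg
equilibrium strategies, `limsup_n R(g_n*) ≥ α(∪_λ G_λ)`. -/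
theorem stmt13 {X Λ : Type*} [Fintype X] [Nonempty X] [Fintype Λ] [Nonempty Λ]
    (U : X → X → Λ → ℝ) (P : Λ → ℝ) (hP0 : ∀ t, 0 ≤ P t) (hP1 : ∑ t, P t = 1)
    (gstar : ∀ n : ℕ, (Fin n → X) → (Fin n → X))
    (hstar : ∀ n : ℕ, 1 ≤ n → ∀ g : (Fin n → X) → (Fin n → X),
      IE.Dstar U P n g ≤ IE.Dstar U P n (gstar n)) :
    (IE.alpha (⨆ t : Λ, IE.senderGraph1 U t) : ℝ)
      ≤ Filter.limsup
          (fun n : ℕ => IE.Dstar U P n (gstar n) ^ ((1 : ℝ) / n)) Filter.atTop :=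
  stmt13_general U P hP0 hP1 gstar hstar
end
end
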